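/- arXiv:1510.03741 — 3 statements merged into one kernel-verified Lean document; each statement's English description precedes it below -/
import Mathlib

section
/- For real numbers k1, k2, k3, with H = (k1+k2+k3)/3, R = (k1k2+k1k3+k2k3)/3, and K = k1k2k3, one has HK ≤ (3/2)R^2. -/
/-! With `p = k1 k2`, `q = k1 k3`, `r = k2 k3` one has `3 H K = p q + p r + q r` and
`3 R = p + q + r`, so `H K ≤ R ^ 2` is the inequality `3 (p q + p r + q r) ≤ (p + q + r) ^ 2`;
the constant `3 / 2` then leaves room to spare. -/

theorem three_mul_add_mul_add_mul_le_sq {α : Type*} [CommRing α] [LinearOrder α]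
    [IsStrictOrderedRing α] (p q r : α) :
    3 * (p * q + p * r + q * r) ≤ (p + q + r) ^ 2 := by
  nlinarith [sq_nonneg (p - q), sq_nonneg (p - r), sq_nonneg (q - r)]

theorem mean_mul_gaussKronecker_le_sq_scalar (k1 k2 k3 : ℝ) :
    (k1 + k2 + k3) / 3 * (k1 * k2 * k3) ≤ ((k1 * k2 + k1 * k3 + k2 * k3) / 3) ^ 2 := by
  have key := three_mul_add_mul_add_mul_le_sq (k1 * k2) (k1 * k3) (k2 * k3)
  calc (k1 + k2 + k3) / 3 * (k1 * k2 * k3)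
      = 3 * (k1 * k2 * (k1 * k3) + k1 * k2 * (k2 * k3) + k1 * k3 * (k2 * k3)) / 9 := by ring
    _ ≤ (k1 * k2 + k1 * k3 + k2 * k3) ^ 2 / 9 := by gcongr
    _ = ((k1 * k2 + k1 * k3 + k2 * k3) / 3) ^ 2 := by ring

theorem stmt_1 (k1 k2 k3 H R K : ℝ)
    (hH : H = (k1 + k2 + k3) / 3)
    (hR : R = (k1 * k2 + k1 * k3 + k2 * k3) / 3)
    (hK : K = k1 * k2 * k3) :
    H * K ≤ 3 / 2 * R ^ 2 := by
  subst hH hR hK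
  calc _ ≤ ((k1 * k2 + k1 * k3 + k2 * k3) / 3) ^ 2 :=
        mean_mul_gaussKronecker_le_sq_scalar k1 k2 k3
    _ ≤ 3 / 2 * ((k1 * k2 + k1 * k3 + k2 * k3) / 3) ^ 2 :=
      le_mul_of_one_le_left (sq_nonneg _) (by norm_num)
end

section
/- For real numbers k1, k2, k3 with H = (k1+k2+k3)/3 and R = (k1k2+k1k3+k2k3)/3 and K = k1k2k3, equality HK = (3/2)R^2 holds if and only if at least two of k1, k2, k3 are zero. -/
/-! Expanding, `H K - (3/2) R² = -((k₁k₂)² + (k₁k₃)² + (k₂k₃)²) / 6`, so the equality says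
that all three pairwise products of the principal curvatures vanish, which happens exactly
when two of them are zero. -/

theorem sq_add_sq_add_sq_eq_zero_iff {R : Type*} [Ring R] [LinearOrder R] [IsStrictOrderedRing R]
    {a b c : R} : a ^ 2 + b ^ 2 + c ^ 2 = 0 ↔ a = 0 ∧ b = 0 ∧ c = 0 := by
  rw [add_eq_zero_iff_of_nonneg (by positivity) (sq_nonneg c),
    add_eq_zero_iff_of_nonneg (sq_nonneg a) (sq_nonneg b)]
  simp only [pow_eq_zero_iff two_ne_zero, and_assoc]

theorem mul_eq_zero_pairwise_iff {M₀ : Type*} [MulZeroClass M₀] [NoZeroDivisors M₀] {a b c : M₀} :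
    a * b = 0 ∧ a * c = 0 ∧ b * c = 0 ↔ (a = 0 ∧ b = 0) ∨ (a = 0 ∧ c = 0) ∨ (b = 0 ∧ c = 0) := by
  simp only [mul_eq_zero]
  tauto

theorem mean_mul_prod_eq_three_halves_mul_sq_iff {K : Type*} [Field K] [CharZero K]
    (k1 k2 k3 : K) :
    (k1 + k2 + k3) / 3 * (k1 * k2 * k3) = 3 / 2 * ((k1 * k2 + k1 * k3 + k2 * k3) / 3) ^ 2 ↔
      (k1 * k2) ^ 2 + (k1 * k3) ^ 2 + (k2 * k3) ^ 2 = 0 := by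
  constructor <;> intro h
  · linear_combination -6 * h
  · linear_combination -h / 6

theorem stmt_2 (k1 k2 k3 H R K : ℝ)
    (hH : H = (k1 + k2 + k3) / 3)
    (hR : R = (k1 * k2 + k1 * k3 + k2 * k3) / 3)
    (hK : K = k1 * k2 * k3) :
    H * K = 3 / 2 * R ^ 2 ↔
      (k1 = 0 ∧ k2 = 0) ∨ (k1 = 0 ∧ k3 = 0) ∨ (k2 = 0 ∧ k3 = 0) := by
  rw [hH, hR, hK, mean_mul_prod_eq_three_halves_mul_sq_iff, sq_add_sq_add_sq_eq_zero_iff,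
    mul_eq_zero_pairwise_iff]
end

section
/- Let k1, k2, k3 be real numbers with k1k2 + k1k3 + k2k3 = 0, k1 + k2 + k3 > 0, and k1k2k3 < 0. Then for each i, 3H - k_i > 0 where 3H = k1 + k2 + k3; that is, P_1 = 3H·I - diag(k1,k2,k3) is positive definite. -/
/-! With `σ₂ = k₁k₂ + k₁k₃ + k₂k₃ = 0`, multiplying `σ₂` by `k₂k₃` gives the identity
`k₁k₂k₃ (k₂ + k₃) = -(k₂k₃)²`. Since `k₁k₂k₃ < 0` forces `k₂k₃ ≠ 0`, the right side is negative,
so `k₂ + k₃ = 3H - k₁` is positive, and likewise for the other indices. -/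

theorem add_pos_of_mul_add_mul_add_mul_eq_zero_of_mul_mul_neg {R : Type*} [CommRing R]
    [LinearOrder R] [IsStrictOrderedRing R] {a b c : R}
    (h₂ : a * b + a * c + b * c = 0) (h₃ : a * b * c < 0) : 0 < b + c := by
  have hbc : b * c ≠ 0 := fun h => h₃.ne (by rw [mul_assoc, h, mul_zero])
  have key : a * b * c * (b + c) = -(b * c) ^ 2 := by linear_combination (b * c) * h₂
  have : a * b * c * (b + c) < 0 := key ▸ neg_neg_of_pos (sq_pos_of_ne_zero hbc)
  exact pos_of_mul_neg_right this h₃.le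

theorem Matrix.posDef_smul_one_sub_diagonal_iff {n R : Type*} [Ring R] [PartialOrder R]
    [StarRing R] [StarOrderedRing R] [DecidableEq n] [NoZeroDivisors R] [Nontrivial R]
    (c : R) (d : n → R) :
    (c • (1 : Matrix n n R) - Matrix.diagonal d).PosDef ↔ ∀ i, 0 < c - d i := by
  rw [Matrix.smul_one_eq_diagonal, Matrix.diagonal_sub, Matrix.posDef_diagonal_iff]

theorem stmt_16_general (k1 k2 k3 H : ℝ)
    (hR : k1 * k2 + k1 * k3 + k2 * k3 = 0)
    (hK : k1 * k2 * k3 < 0)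
    (hH : 3 * H = k1 + k2 + k3) :
    (∀ i : Fin 3, 3 * H - ![k1, k2, k3] i > 0) ∧
      ((3 * H) • (1 : Matrix (Fin 3) (Fin 3) ℝ)
        - Matrix.diagonal ![k1, k2, k3]).PosDef := by
  have h₁ : 0 < k2 + k3 := add_pos_of_mul_add_mul_add_mul_eq_zero_of_mul_mul_neg hR hK
  have h₂ : 0 < k1 + k3 := add_pos_of_mul_add_mul_add_mul_eq_zero_of_mul_mul_neg
    (a := k2) (by linear_combination hR) (by linarith)
  have h₃ : 0 < k1 + k2 := add_pos_of_mul_add_mul_add_mul_eq_zero_of_mul_mul_neg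
    (a := k3) (by linear_combination hR) (by linarith)
  have hall : ∀ i : Fin 3, 3 * H - ![k1, k2, k3] i > 0 := by
    intro i
    fin_cases i <;> simp <;> linarith
  exact ⟨hall, (Matrix.posDef_smul_one_sub_diagonal_iff _ _).2 hall⟩

theorem stmt_16 (k1 k2 k3 H : ℝ)
    (hR : k1 * k2 + k1 * k3 + k2 * k3 = 0)
    (hpos : k1 + k2 + k3 > 0)
    (hK : k1 * k2 * k3 < 0)
    (hH : 3 * H = k1 + k2 + k3) :
    (∀ i : Fin 3, 3 * H - ![k1, k2, k3] i > 0) ∧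
      ((3 * H) • (1 : Matrix (Fin 3) (Fin 3) ℝ)
        - Matrix.diagonal ![k1, k2, k3]).PosDef :=
  stmt_16_general k1 k2 k3 H hR hK hH
end
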